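/- arXiv:1504.04079 — 2 statements merged into one kernel-verified Lean document; each statement's English description precedes it below -/
import Mathlib

section
/- For every real number M > 0 and every (u,v) ∈ ℝ² with u·v < 1, the Kruskal radius function r(u,v) = r_M(u·v) has partial derivatives ∂_u r(u,v) = -(4M²·v / r(u,v))·exp(-r(u,v)/(2M)) and ∂_v r(u,v) = -(4M²·u / r(u,v))·exp(-r(u,v)/(2M)). -/
/-!
`f_M'(ρ) = -(ρ/(4M²))·exp(ρ/(2M))` is negative for `ρ > 0`, so `f_M` is injective there and
`r_M` agrees near each `s < 1` with the local inverse of `f_M` at `r_M(s)`. Hence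
`r_M'(s) = 1 / f_M'(r_M(s)) = -(4M²/r_M(s))·exp(-r_M(s)/(2M))`, and the chain rule through
`s = u·v` gives both partial derivatives.
-/

/-- The Kruskal relation function `f_M(ρ) = (1 - ρ/(2M))·exp(ρ/(2M))`. -/
noncomputable def fM (M ρ : ℝ) : ℝ := (1 - ρ / (2 * M)) * Real.exp (ρ / (2 * M))

open Filter Set Topology

section InverseFunction

variable {𝕜 : Type*} [NontriviallyNormedField 𝕜] [CompleteSpace 𝕜]

/-- Unlike `HasStrictDerivAt.of_local_left_inverse`, no continuity of `g` is assumed: injectivity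
of `f` on `s` forces `g` to agree near `a` with the local inverse of `f`. -/
theorem HasStrictDerivAt.of_injOn_of_right_inverse {f g : 𝕜 → 𝕜} {f' a : 𝕜} {s : Set 𝕜}
    (hf : HasStrictDerivAt f f' (g a)) (hf' : f' ≠ 0) (hs : s ∈ 𝓝 (g a)) (hinj : InjOn f s)
    (hgs : ∀ᶠ y in 𝓝 a, g y ∈ s) (hfg : ∀ᶠ y in 𝓝 a, f (g y) = y) :
    HasStrictDerivAt g f'⁻¹ a := by
  have hfa : f (g a) = a := hfg.self_of_nhds
  set h := hf.localInverse f f' (g a) hf'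
  have hh : HasStrictDerivAt h f'⁻¹ a := hfa ▸ hf.to_localInverse hf'
  have hha : h a = g a := by
    simpa only [hfa] using (hf.eventually_left_inverse hf').self_of_nhds
  have hhs : ∀ᶠ y in 𝓝 a, h y ∈ s := hh.hasDerivAt.continuousAt.eventually (hha ▸ hs)
  have hfh : ∀ᶠ y in 𝓝 a, f (h y) = y := hfa ▸ hf.eventually_right_inverse hf'
  refine hh.congr_of_eventuallyEq ?_
  filter_upwards [hgs, hfg, hhs, hfh] with y hgy hfgy hhy hfhy
  exact hinj hhy hgy (hfhy.trans hfgy.symm)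

end InverseFunction

theorem fM_hasStrictDerivAt (M ρ : ℝ) :
    HasStrictDerivAt (fM M) (-(ρ / (4 * M ^ 2)) * Real.exp (ρ / (2 * M))) ρ := by
  have hlin : HasStrictDerivAt (fun x : ℝ => x / (2 * M)) (1 / (2 * M)) ρ :=
    (hasStrictDerivAt_id ρ).div_const (2 * M)
  refine ((hlin.const_sub 1).mul hlin.exp).congr_deriv ?_
  ring

theorem fM_strictAntiOn {M : ℝ} (hM : 0 < M) : StrictAntiOn (fM M) (Ioi 0) := by
  refine strictAntiOn_of_hasDerivWithinAt_neg (convex_Ioi 0)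
    (fun x _ => (fM_hasStrictDerivAt M x).hasDerivAt.continuousAt.continuousWithinAt)
    (fun x _ => (fM_hasStrictDerivAt M x).hasDerivAt.hasDerivWithinAt) fun x hx => ?_
  rw [interior_Ioi, mem_Ioi] at hx
  have : 0 < x / (4 * M ^ 2) * Real.exp (x / (2 * M)) := by positivity
  linarith

theorem hasStrictDerivAt_of_fM_right_inverse {M : ℝ} (hM : 0 < M) {rM : ℝ → ℝ}
    (hrM : ∀ s : ℝ, s < 1 → 0 < rM s ∧ fM M (rM s) = s) {s : ℝ} (hs : s < 1) :
    HasStrictDerivAt rM (-(4 * M ^ 2 / rM s) * Real.exp (-(rM s) / (2 * M))) s := by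
  have hrs : 0 < rM s := (hrM s hs).1
  have hrM_near : ∀ᶠ y in 𝓝 s, 0 < rM y ∧ fM M (rM y) = y :=
    (eventually_lt_nhds hs).mono hrM
  have hderiv : -(rM s / (4 * M ^ 2)) * Real.exp (rM s / (2 * M)) ≠ 0 := by
    have : 0 < rM s / (4 * M ^ 2) * Real.exp (rM s / (2 * M)) := by positivity
    linarith
  refine ((fM_hasStrictDerivAt M (rM s)).of_injOn_of_right_inverse hderiv (Ioi_mem_nhds hrs)
    (fM_strictAntiOn hM).injOn (hrM_near.mono fun _ h => h.1)
    (hrM_near.mono fun _ h => h.2)).congr_deriv ?_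
  rw [neg_div, Real.exp_neg, neg_mul, neg_mul, inv_neg, mul_inv, inv_div]

/-- For every `M > 0` and every `(u,v)` with `u·v < 1`, the Kruskal radius function
`r(u,v) = r_M(u·v)` (with `r_M` the Schwarzschild radius function, characterized by
`r_M(s) > 0` and `f_M(r_M(s)) = s` for all `s < 1`) has partial derivatives
`∂_u r = -(4M²·v / r)·exp(-r/(2M))` and `∂_v r = -(4M²·u / r)·exp(-r/(2M))`. -/
theorem kruskal_radius_partials (M : ℝ) (hM : 0 < M) (rM : ℝ → ℝ)
    (hrM : ∀ s : ℝ, s < 1 → 0 < rM s ∧ fM M (rM s) = s)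
    (u v : ℝ) (huv : u * v < 1) :
    HasDerivAt (fun t : ℝ => rM (t * v))
      (-(4 * M ^ 2 * v / rM (u * v)) * Real.exp (-(rM (u * v)) / (2 * M))) u ∧
    HasDerivAt (fun t : ℝ => rM (u * t))
      (-(4 * M ^ 2 * u / rM (u * v)) * Real.exp (-(rM (u * v)) / (2 * M))) v := by
  have hr := (hasStrictDerivAt_of_fM_right_inverse hM hrM huv).hasDerivAt
  constructor
  · exact (hr.comp u (hasDerivAt_mul_const v)).congr_deriv (by ring)
  · exact (hr.comp v ((hasDerivAt_id v).const_mul u)).congr_deriv (by ring)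
end

section
/- For every real number M > 0, every real q ≥ 0, and every (τ,x) with 0 ≤ τ ≤ 2 and (1-τ)² - x² < 1, the Schwarzschild-frame spatial derivative of the weight r^{-q} obeys the exact bound |(1/Ω(τ,x))·∂_x (r(τ,x)^{-q})| ≤ (q/(2√M))·r(τ,x)^{-q-1/2}; i.e., each spatial frame derivative of a power weight costs at most a factor comparable to r^{-1/2}. -/
/-- The radius function in the `(τ,x)` coordinates: `r(τ,x) = r_M((1-τ)² - x²)`. -/
noncomputable def rr (rM : ℝ → ℝ) (τ x : ℝ) : ℝ := rM ((1 - τ) ^ 2 - x ^ 2)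

/-- The conformal factor `Ω²(τ,x) = (32M³/r(τ,x))·exp(-r(τ,x)/(2M))`. -/
noncomputable def Om2 (M : ℝ) (rM : ℝ → ℝ) (τ x : ℝ) : ℝ :=
  32 * M ^ 3 / rr rM τ x * Real.exp (-(rr rM τ x) / (2 * M))

/-- `Ω(τ,x) = √(Ω²(τ,x))`. -/
noncomputable def Om (M : ℝ) (rM : ℝ → ℝ) (τ x : ℝ) : ℝ := Real.sqrt (Om2 M rM τ x)

/-!
Implicit differentiation of `f_M(r) = (1-τ)² - x²` gives `∂ₓr = 8M²x / (r e^{r/2M})`, so the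
square of the frame derivative `Ω⁻¹ ∂ₓr` is `2Mx² / (r e^{r/2M})`. For `0 ≤ τ ≤ 2` we have
`x² ≤ 1 - f_M(r)`, and `e^{-u} ≤ 1 - u + u²/2` (with `u = r/2M`) bounds this by
`r² e^{r/2M} / (8M²)`; hence `|Ω⁻¹ ∂ₓr| ≤ √(r/4M)`. The chain rule for `r^{-q}` contributes the
factor `q r^{-q-1}`.
-/

open Real Set Topology

lemma one_le_one_sub_add_sq_div_two_mul_exp {u : ℝ} (hu : 0 ≤ u) :
    1 ≤ (1 - u + u ^ 2 / 2) * exp u := by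
  have hderiv (t : ℝ) :
      HasDerivAt (fun t => (1 - t + t ^ 2 / 2) * exp t) (t ^ 2 / 2 * exp t) t := by
    refine ((((hasDerivAt_id t).const_sub 1).add ((hasDerivAt_pow 2 t).div_const 2)).mul
      (hasDerivAt_exp t)).congr_deriv ?_
    simp only [id, Pi.add_apply, Nat.cast_ofNat]
    ring
  have hmono : Monotone fun t => (1 - t + t ^ 2 / 2) * exp t :=
    monotone_of_deriv_nonneg (fun t => (hderiv t).differentiableAt)
      fun t => (hderiv t).deriv ▸ by positivity
  simpa using hmono hu

lemma hasDerivAt_fM (M ρ : ℝ) :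
    HasDerivAt (fM M) (-(ρ / (4 * M ^ 2)) * exp (ρ / (2 * M))) ρ := by
  have hlin : HasDerivAt (fun t => t / (2 * M)) (1 / (2 * M)) ρ := by
    simpa using (hasDerivAt_id ρ).div_const (2 * M)
  refine ((hlin.const_sub 1).mul ((hasDerivAt_exp _).comp ρ hlin)).congr_deriv ?_
  simp only [Function.comp_apply]
  ring

@[simp] lemma fM_zero (M : ℝ) : fM M 0 = 1 := by simp [fM]

lemma strictAntiOn_fM {M : ℝ} (hM : M ≠ 0) : StrictAntiOn (fM M) (Ici 0) := by
  refine strictAntiOn_of_deriv_neg (convex_Ici 0)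
    (fun ρ _ => (hasDerivAt_fM M ρ).continuousAt.continuousWithinAt) fun ρ hρ => ?_
  rw [interior_Ici, mem_Ioi] at hρ
  rw [(hasDerivAt_fM M ρ).deriv, neg_mul, neg_lt_zero]
  positivity

lemma fM_lt_one {M ρ : ℝ} (hM : M ≠ 0) (hρ : 0 < ρ) : fM M ρ < 1 :=
  fM_zero M ▸ strictAntiOn_fM hM self_mem_Ici hρ.le hρ

lemma one_sub_fM_le {M ρ : ℝ} (hM : 0 < M) (hρ : 0 ≤ ρ) :
    1 - fM M ρ ≤ ρ ^ 2 * exp (ρ / (2 * M)) / (8 * M ^ 2) := by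
  have key := one_le_one_sub_add_sq_div_two_mul_exp (u := ρ / (2 * M)) (by positivity)
  calc 1 - fM M ρ
      ≤ (1 - ρ / (2 * M) + (ρ / (2 * M)) ^ 2 / 2) * exp (ρ / (2 * M)) - fM M ρ := by linarith
    _ = ρ ^ 2 * exp (ρ / (2 * M)) / (8 * M ^ 2) := by unfold fM; ring

section RadiusFunction

variable {M : ℝ} {rM : ℝ → ℝ}

lemma rM_fM (hM : M ≠ 0) (hrM : ∀ s : ℝ, s < 1 → 0 < rM s ∧ fM M (rM s) = s)
    {ρ : ℝ} (hρ : 0 < ρ) : rM (fM M ρ) = ρ := by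
  obtain ⟨hpos, hinv⟩ := hrM _ (fM_lt_one hM hρ)
  exact (strictAntiOn_fM hM).injOn (mem_Ici.2 hpos.le) (mem_Ici.2 hρ.le) hinv

lemma strictAntiOn_rM (hM : M ≠ 0) (hrM : ∀ s : ℝ, s < 1 → 0 < rM s ∧ fM M (rM s) = s) :
    StrictAntiOn rM (Iio 1) := by
  intro s hs t ht hst
  by_contra! hle
  have := (strictAntiOn_fM hM).antitoneOn (mem_Ici.2 (hrM s hs).1.le)
    (mem_Ici.2 (hrM t ht).1.le) hle
  rw [(hrM s hs).2, (hrM t ht).2] at this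
  linarith

lemma image_rM_Iio_one (hM : M ≠ 0) (hrM : ∀ s : ℝ, s < 1 → 0 < rM s ∧ fM M (rM s) = s) :
    rM '' Iio 1 = Ioi 0 := by
  ext ρ
  constructor
  · rintro ⟨s, hs, rfl⟩
    exact (hrM s hs).1
  · intro hρ
    exact ⟨fM M ρ, fM_lt_one hM hρ, rM_fM hM hrM hρ⟩

lemma continuousAt_rM (hM : M ≠ 0) (hrM : ∀ s : ℝ, s < 1 → 0 < rM s ∧ fM M (rM s) = s)
    {s : ℝ} (hs : s < 1) : ContinuousAt rM s := by
  have hanti := strictAntiOn_rM hM hrM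
  have himage : rM '' Iio 1 ∈ 𝓝 (rM s) := by
    rw [image_rM_Iio_one hM hrM]
    exact isOpen_Ioi.mem_nhds (hrM s hs).1
  exact StrictMonoOn.continuousAt_of_image_mem_nhds (f := OrderDual.toDual ∘ rM)
    hanti.dual_right (Iio_mem_nhds hs) himage

lemma hasDerivAt_rM (hM : M ≠ 0) (hrM : ∀ s : ℝ, s < 1 → 0 < rM s ∧ fM M (rM s) = s)
    {s : ℝ} (hs : s < 1) :
    HasDerivAt rM (-(rM s / (4 * M ^ 2)) * exp (rM s / (2 * M)))⁻¹ s := by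
  have hr := (hrM s hs).1
  refine HasDerivAt.of_local_left_inverse (continuousAt_rM hM hrM hs)
    (hasDerivAt_fM M (rM s)) (by rw [neg_mul, neg_ne_zero]; positivity) ?_
  filter_upwards [Iio_mem_nhds hs] with t ht using (hrM t ht).2

lemma hasDerivAt_rr (hM : M ≠ 0) (hrM : ∀ s : ℝ, s < 1 → 0 < rM s ∧ fM M (rM s) = s)
    {τ x : ℝ} (h : (1 - τ) ^ 2 - x ^ 2 < 1) :
    HasDerivAt (rr rM τ)
      (8 * M ^ 2 * x / (rr rM τ x * exp (rr rM τ x / (2 * M)))) x := by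
  have hr : 0 < rr rM τ x := (hrM _ h).1
  have hs : HasDerivAt (fun y => (1 - τ) ^ 2 - y ^ 2) (-(2 * x)) x := by
    simpa using (hasDerivAt_pow 2 x).const_sub ((1 - τ) ^ 2)
  refine ((hasDerivAt_rM hM hrM h).comp x hs).congr_deriv ?_
  unfold rr at hr ⊢
  field_simp
  ring

lemma eight_mul_sq_mul_sq_le_rr_sq_mul_exp (hM : 0 < M)
    (hrM : ∀ s : ℝ, s < 1 → 0 < rM s ∧ fM M (rM s) = s) {τ x : ℝ} (hτ0 : 0 ≤ τ) (hτ2 : τ ≤ 2)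
    (h : (1 - τ) ^ 2 - x ^ 2 < 1) :
    8 * M ^ 2 * x ^ 2 ≤ rr rM τ x ^ 2 * exp (rr rM τ x / (2 * M)) := by
  obtain ⟨hr, hinv⟩ := hrM _ h
  have hbound := one_sub_fM_le hM hr.le
  rw [hinv] at hbound
  have hτ : (1 - τ) ^ 2 ≤ 1 := by nlinarith
  rw [le_div_iff₀ (by positivity)] at hbound
  unfold rr
  nlinarith

lemma abs_one_div_Om_mul_deriv_rr_le (hM : 0 < M)
    (hrM : ∀ s : ℝ, s < 1 → 0 < rM s ∧ fM M (rM s) = s) {τ x : ℝ} (hτ0 : 0 ≤ τ) (hτ2 : τ ≤ 2)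
    (h : (1 - τ) ^ 2 - x ^ 2 < 1) :
    |(1 / Om M rM τ x) * deriv (rr rM τ) x| ≤ sqrt (rr rM τ x) / (2 * sqrt M) := by
  have hr : 0 < rr rM τ x := (hrM _ h).1
  have hx := eight_mul_sq_mul_sq_le_rr_sq_mul_exp hM hrM hτ0 hτ2 h
  rw [(hasDerivAt_rr hM.ne' hrM h).deriv]
  set r := rr rM τ x with hr_def
  set E := exp (r / (2 * M)) with hE
  have hOm2 : Om2 M rM τ x = 32 * M ^ 3 / (r * E) := by
    rw [Om2, ← hr_def, neg_div, exp_neg, ← hE]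
    field_simp
  have hOm : (1 / Om M rM τ x) ^ 2 = r * E / (32 * M ^ 3) := by
    rw [Om, one_div, inv_pow, sq_sqrt (by rw [hOm2]; positivity), hOm2, inv_div]
  refine abs_le_of_sq_le_sq ?_ (by positivity)
  have hrhs : (sqrt r / (2 * sqrt M)) ^ 2 = r / (4 * M) := by
    rw [div_pow, mul_pow, sq_sqrt hr.le, sq_sqrt hM.le]
    ring
  calc (1 / Om M rM τ x * (8 * M ^ 2 * x / (r * E))) ^ 2
      = 2 * M * x ^ 2 / (r * E) := by
        rw [mul_pow, hOm]
        field_simp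
        ring
    _ ≤ r / (4 * M) := by
        rw [div_le_div_iff₀ (by positivity) (by positivity)]
        nlinarith
    _ = (sqrt r / (2 * sqrt M)) ^ 2 := hrhs.symm

end RadiusFunction

/-- For every `M > 0`, every real `q ≥ 0`, and every `(τ,x)` with `0 ≤ τ ≤ 2` and
`(1-τ)² - x² < 1`, the Schwarzschild-frame spatial derivative of the weight `r^{-q}`
obeys `|(1/Ω)·∂_x(r^{-q})| ≤ (q/(2√M))·r^{-q-1/2}`: each spatial frame derivative of a
power weight costs at most a factor comparable to `r^{-1/2}`. -/
theorem weight_spatial_frame_derivative_bound (M : ℝ) (hM : 0 < M) (rM : ℝ → ℝ)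
    (hrM : ∀ s : ℝ, s < 1 → 0 < rM s ∧ fM M (rM s) = s)
    (q : ℝ) (hq : 0 ≤ q) (τ x : ℝ) (hτ0 : 0 ≤ τ) (hτ2 : τ ≤ 2)
    (h : (1 - τ) ^ 2 - x ^ 2 < 1) :
    |(1 / Om M rM τ x) * deriv (fun y : ℝ => rr rM τ y ^ (-q)) x| ≤
      q / (2 * Real.sqrt M) * rr rM τ x ^ (-q - 1 / 2) := by
  set r := rr rM τ x
  have hr : 0 < r := (hrM _ h).1
  have hweight : deriv (fun y => rr rM τ y ^ (-q)) x = deriv (rr rM τ) x * -q * r ^ (-q - 1) :=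
    ((hasDerivAt_rr hM.ne' hrM h).differentiableAt.hasDerivAt.rpow_const (Or.inl hr.ne')).deriv
  have hsplit : r ^ (-q - 1 / 2) = r ^ (-q - 1) * sqrt r := by
    rw [sqrt_eq_rpow, ← rpow_add hr]
    congr 1
    ring
  calc |1 / Om M rM τ x * deriv (fun y => rr rM τ y ^ (-q)) x|
      = q * r ^ (-q - 1) * |1 / Om M rM τ x * deriv (rr rM τ) x| := by
        rw [hweight, show ∀ a b : ℝ, a * (b * -q * r ^ (-q - 1)) = -(q * r ^ (-q - 1)) * (a * b)
          by intros; ring, abs_mul, abs_neg, abs_of_nonneg (by positivity)]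
    _ ≤ q * r ^ (-q - 1) * (sqrt r / (2 * sqrt M)) := by
        gcongr
        exact abs_one_div_Om_mul_deriv_rr_le hM hrM hτ0 hτ2 h
    _ = q / (2 * sqrt M) * r ^ (-q - 1 / 2) := by
        rw [hsplit]
        ring
end
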